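/- arXiv:1610.04302 — 8 statements merged into one kernel-verified Lean document; each statement's English description precedes it below -/
import Mathlib

section
/- Let (L, [·,·]) be a Lie algebra over a field K and let α, β: L → L be commuting Lie algebra endomorphisms. Define {a,b} = [α(a), β(b)] for all a, b ∈ L. Then (L, {·,·}, α, β) is a BiHom-Lie algebra. -/
/-- The Yau twist of a Lie algebra by two commuting endomorphisms is a
BiHom-Lie algebra. -/
theorem stmt_1 {K : Type*} [Field K] {L : Type*} [LieRing L] [LieAlgebra K L]
    (α β : L →ₗ[K] L)
    (hα : ∀ a b, α ⁅a, b⁆ = ⁅α a, α b⁆)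
    (hβ : ∀ a b, β ⁅a, b⁆ = ⁅β a, β b⁆)
    (hcomm : ∀ a, α (β a) = β (α a))
    (br : L → L → L) (hbr : ∀ a b, br a b = ⁅α a, β b⁆) :
    (∀ a a', br (β a) (α a') = - br (β a') (α a)) ∧
    (∀ a a' a'', br (β (β a)) (br (β a') (α a''))
      + br (β (β a')) (br (β a'') (α a))
      + br (β (β a'')) (br (β a) (α a')) = 0) := by
  constructor
  · intro a a'
    rw [hbr, hbr, hcomm, hcomm, ← lie_skew]
  · intro a a' a''
    simp only [hbr, hβ, hα]
    simp only [← hcomm]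
    exact lie_jacobi (α (β (β a))) (α (β (β a'))) (α (β (β a'')))
end

section
/- Let (L, [·,·], α, β) be a regular BiHom-Lie algebra and let u ∈ L satisfy α(u) = u and β(u) = u. Then the linear map D_{k,l}(u): L → L defined by D_{k,l}(u)(v) = −[α^k β^l(v), u] is an α^{k+1}β^l-derivation of L, i.e. it commutes with α and β and satisfies D_{k,l}(u)([v,w]) = [D_{k,l}(u)(v), α^{k+1}β^l(w)] + [α^{k+1}β^l(v), D_{k,l}(u)(w)] for all v, w ∈ L. -/
/-- For a fixed point `u` of `α` and `β` in a regular BiHom-Lie algebra, the map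
`D_{k,l}(u)(v) = -[αᵏβˡ(v), u]` is an `α^{k+1}βˡ`-derivation. -/
theorem stmt_5 {K : Type*} [Field K] {L : Type*} [AddCommGroup L] [Module K L]
    (br : L →ₗ[K] L →ₗ[K] L) (α β : L ≃ₗ[K] L)
    (hcomm : ∀ a, α (β a) = β (α a))
    (hαm : ∀ a b, α (br a b) = br (α a) (α b))
    (hβm : ∀ a b, β (br a b) = br (β a) (β b))
    (hskew : ∀ a a', br (β a) (α a') = - br (β a') (α a))
    (hjac : ∀ a a' a'', br (β (β a)) (br (β a') (α a''))
      + br (β (β a')) (br (β a'') (α a))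
      + br (β (β a'')) (br (β a) (α a')) = 0)
    (k l : ℤ) (u : L) (huα : α u = u) (huβ : β u = u)
    (D : L → L) (hD : ∀ v, D v = - br ((α ^ k * β ^ l) v) u) :
    (∀ v, D (α v) = α (D v)) ∧ (∀ v, D (β v) = β (D v)) ∧
    (∀ v w, D (br v w) = br (D v) ((α ^ (k + 1) * β ^ l) w)
      + br ((α ^ (k + 1) * β ^ l) v) (D w)) := by
  -- the subgroup of bracket-preserving automorphisms
  set S : Subgroup (L ≃ₗ[K] L) :=
    { carrier := {e | ∀ a b, e (br a b) = br (e a) (e b)}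
      one_mem' := by intro a b; rfl
      mul_mem' := by
        intro e f he hf a b
        show e (f (br a b)) = br (e (f a)) (e (f b))
        rw [hf, he]
      inv_mem' := by
        intro e he a b
        show e.symm (br a b) = br (e.symm a) (e.symm b)
        apply e.injective
        rw [he, e.apply_symm_apply, e.apply_symm_apply, e.apply_symm_apply] } with hS
  have hαS : α ∈ S := hαm
  have hβS : β ∈ S := hβm
  set φ : L ≃ₗ[K] L := α ^ k * β ^ l with hφ
  have hφS : φ ∈ S := S.mul_mem (S.zpow_mem hαS k) (S.zpow_mem hβS l)
  have hφm : ∀ a b, φ (br a b) = br (φ a) (φ b) := hφS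
  -- commutation
  have hαβ : Commute α β := LinearEquiv.ext fun a => hcomm a
  have hcα : Commute α φ := ((Commute.refl α).zpow_right k).mul_right (hαβ.zpow_right l)
  have hcβ : Commute β φ := ((hαβ.symm.zpow_right k)).mul_right ((Commute.refl β).zpow_right l)
  have hφα : ∀ v, φ (α v) = α (φ v) := by
    intro v
    have : (φ * α) v = (α * φ) v := by rw [hcα.eq]
    exact this
  have hφβ : ∀ v, φ (β v) = β (φ v) := by
    intro v
    have : (φ * β) v = (β * φ) v := by rw [hcβ.eq]
    exact this
  -- fixed points under inverses
  have huα' : α.symm u = u := by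
    apply α.injective; rw [α.apply_symm_apply, huα]
  have huβ' : β.symm u = u := by
    apply β.injective; rw [β.apply_symm_apply, huβ]
  have hβm' : ∀ a b, β.symm (br a b) = br (β.symm a) (β.symm b) := fun a b => S.inv_mem hβS a b
  have hcomm' : ∀ a, α (β.symm a) = β.symm (α a) := by
    intro a
    apply β.injective
    rw [β.apply_symm_apply, ← hcomm, β.apply_symm_apply]
  -- key identity
  have key : ∀ x y, br (br x y) u = br (br x u) (α y) + br (α x) (br y u) := by
    intro x y
    have H := hjac (α (β.symm (β.symm x))) (β.symm y) u
    rw [huα, huβ, huβ] at H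
    rw [show β (α (β.symm (β.symm x))) = α (β.symm x) by
          rw [← hcomm, β.apply_symm_apply]] at H
    rw [show β (α (β.symm x)) = α x by rw [← hcomm, β.apply_symm_apply]] at H
    rw [β.apply_symm_apply] at H
    -- H : br (α x) (br y u) + br (β y) (br u (α (α (β.symm (β.symm x)))))
    --     + br u (br (α (β.symm x)) (α (β.symm y))) = 0
    have T2 : br u (α (α (β.symm (β.symm x)))) = - br (α (β.symm x)) u := by
      have := hskew u (α (β.symm (β.symm x)))
      rw [huβ, huα] at this
      rw [this, show β (α (β.symm (β.symm x))) = α (β.symm x) by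
          rw [← hcomm, β.apply_symm_apply]]
    have T3 : br u (br (α (β.symm x)) (α (β.symm y))) = - br (br x y) u := by
      have h1 : br (α (β.symm x)) (α (β.symm y)) = α (β.symm (br x y)) := by
        rw [hβm', hαm]
      rw [h1]
      have := hskew u (β.symm (br x y))
      rw [huβ, huα, β.apply_symm_apply] at this
      rw [this]
    have T2' : br (br x u) (α y) = - br (β y) (br (α (β.symm x)) u) := by
      have := hskew (β.symm (br x u)) y
      rw [β.apply_symm_apply] at this
      rw [this]
      congr 1
      rw [hcomm', hαm, huα, hβm', huβ', hcomm']
    rw [T2, T3] at H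
    simp only [map_neg, LinearMap.neg_apply] at H
    rw [← sub_eq_add_neg, sub_eq_zero] at H
    rw [T2', ← H]
    abel
  -- now the three claims
  have hαφ1 : ∀ w, (α ^ (k + 1) * β ^ l) w = α (φ w) := by
    intro w
    have : (α ^ (k + 1) * β ^ l) = α * φ := by
      rw [hφ, zpow_add_one, ((Commute.refl α).zpow_left k).eq, mul_assoc]
    rw [this]; rfl
  refine ⟨?_, ?_, ?_⟩
  · intro v
    rw [hD, hD, hφα, map_neg, hαm, huα]
  · intro v
    rw [hD, hD, hφβ, map_neg, hβm, huβ]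
  · intro v w
    rw [hD, hD, hD, hφm, hαφ1, hαφ1, key (φ v) (φ w)]
    simp only [map_neg, LinearMap.neg_apply]
    abel
end

section
/- Let (L, [·,·], α, β) be a regular BiHom-Lie algebra. If D is an α^k β^l-derivation and D' is an α^s β^t-derivation (both commuting with α and β), then the commutator [D, D'] = D∘D' − D'∘D is an α^{k+s} β^{l+t}-derivation of L. -/
/-! Expanding `⁅D, D'⁆ [v, w]` by the two twisted Leibniz rules, the four mixed terms cancel in
pairs as soon as `D` commutes with the twist `Q = αˢβᵗ` of `D'`, `D'` with the twist `P = αᵏβˡ`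
of `D`, and `P` with `Q`; the surviving terms are twisted by `P Q = α^{k+s} β^{l+t}`. The
automorphisms commuting with a fixed map form a subgroup, so these commutations follow from
those of `D`, `D'` with `α`, `β` and of `α` with `β`. -/

theorem Commute.zpow_mul_zpow_mul_zpow_mul_zpow {G : Type*} [Group G] {a b : G}
    (h : Commute a b) (k l s t : ℤ) :
    a ^ k * b ^ l * (a ^ s * b ^ t) = a ^ (k + s) * b ^ (l + t) := by
  rw [(h.symm.zpow_zpow l s).mul_mul_mul_comm, zpow_add, zpow_add]

namespace LinearEquiv

variable {R M : Type*} [Semiring R] [AddCommMonoid M] [Module R M]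

def commuteWith (f : M → M) : Subgroup (M ≃ₗ[R] M) where
  carrier := {g | Function.Commute f g}
  mul_mem' {g h} hg hh v := by
    change f (g (h v)) = g (h (f v))
    rw [hg, hh]
  one_mem' _ := rfl
  inv_mem' {g} hg v := by
    change f (g.symm v) = g.symm (f v)
    rw [g.eq_symm_apply, ← hg, g.apply_symm_apply]

end LinearEquiv

section TwistedDerivation

variable {R M : Type*} [CommSemiring R] [AddCommGroup M] [Module R M]

def IsTwistedDerivation (br : M →ₗ[R] M →ₗ[R] M) (P : M ≃ₗ[R] M) (D : M → M) : Prop :=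
  ∀ v w, D (br v w) = br (D v) (P w) + br (P v) (D w)

theorem IsTwistedDerivation.lie {br : M →ₗ[R] M →ₗ[R] M} {P Q : M ≃ₗ[R] M}
    {D D' : Module.End R M} (hD : IsTwistedDerivation br P D)
    (hD' : IsTwistedDerivation br Q D') (hDQ : Function.Commute D Q)
    (hD'P : Function.Commute D' P) (hPQ : Commute P Q) :
    IsTwistedDerivation br (P * Q) ⇑(⁅D, D'⁆ : Module.End R M) := by
  intro v w
  have hQP : ∀ v, Q (P v) = P (Q v) := fun v => (LinearEquiv.congr_fun hPQ.eq v).symm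
  simp only [Ring.lie_def, LinearMap.sub_apply, Module.End.mul_apply, LinearEquiv.mul_apply,
    hD _ _, hD' _ _, map_add, map_sub, hDQ v, hDQ w, hD'P v, hD'P w, hQP]
  abel

end TwistedDerivation

theorem stmt_6_general {K : Type*} [Field K] {L : Type*} [AddCommGroup L] [Module K L]
    (br : L →ₗ[K] L →ₗ[K] L) (α β : L ≃ₗ[K] L)
    (hcomm : ∀ a, α (β a) = β (α a))
    (k l s t : ℤ) (D D' : L →ₗ[K] L)
    (hDα : ∀ v, D (α v) = α (D v)) (hDβ : ∀ v, D (β v) = β (D v))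
    (hD'α : ∀ v, D' (α v) = α (D' v)) (hD'β : ∀ v, D' (β v) = β (D' v))
    (hD : ∀ v w, D (br v w) = br (D v) ((α ^ k * β ^ l) w) + br ((α ^ k * β ^ l) v) (D w))
    (hD' : ∀ v w, D' (br v w) = br (D' v) ((α ^ s * β ^ t) w) + br ((α ^ s * β ^ t) v) (D' w))
    (C : L → L) (hC : ∀ v, C v = D (D' v) - D' (D v)) :
    (∀ v, C (α v) = α (C v)) ∧ (∀ v, C (β v) = β (C v)) ∧
    (∀ v w, C (br v w) = br (C v) ((α ^ (k + s) * β ^ (l + t)) w)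
      + br ((α ^ (k + s) * β ^ (l + t)) v) (C w)) := by
  have hαβ : Commute α β := LinearEquiv.ext hcomm
  have hC_eq : C = ⇑(⁅D, D'⁆ : Module.End K L) := funext hC
  have twist_mem {E : L →ₗ[K] L} (hEα : Function.Commute E α) (hEβ : Function.Commute E β)
      (m n : ℤ) : α ^ m * β ^ n ∈ LinearEquiv.commuteWith (R := K) E :=
    mul_mem (zpow_mem hEα m) (zpow_mem hEβ n)
  refine ⟨fun v => by simp only [hC, hDα, hD'α, map_sub],
    fun v => by simp only [hC, hDβ, hD'β, map_sub], ?_⟩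
  rw [hC_eq, ← hαβ.zpow_mul_zpow_mul_zpow_mul_zpow]
  refine IsTwistedDerivation.lie hD hD' (twist_mem hDα hDβ s t) (twist_mem hD'α hD'β k l) ?_
  rw [Commute, SemiconjBy, hαβ.zpow_mul_zpow_mul_zpow_mul_zpow,
    hαβ.zpow_mul_zpow_mul_zpow_mul_zpow, add_comm k, add_comm l]

/-- The commutator of an `αᵏβˡ`-derivation and an `αˢβᵗ`-derivation is an
`α^{k+s}β^{l+t}`-derivation. -/
theorem stmt_6 {K : Type*} [Field K] {L : Type*} [AddCommGroup L] [Module K L]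
    (br : L →ₗ[K] L →ₗ[K] L) (α β : L ≃ₗ[K] L)
    (hcomm : ∀ a, α (β a) = β (α a))
    (hαm : ∀ a b, α (br a b) = br (α a) (α b))
    (hβm : ∀ a b, β (br a b) = br (β a) (β b))
    (hskew : ∀ a a', br (β a) (α a') = - br (β a') (α a))
    (hjac : ∀ a a' a'', br (β (β a)) (br (β a') (α a''))
      + br (β (β a')) (br (β a'') (α a))
      + br (β (β a'')) (br (β a) (α a')) = 0)
    (k l s t : ℤ) (D D' : L →ₗ[K] L)
    (hDα : ∀ v, D (α v) = α (D v)) (hDβ : ∀ v, D (β v) = β (D v))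
    (hD'α : ∀ v, D' (α v) = α (D' v)) (hD'β : ∀ v, D' (β v) = β (D' v))
    (hD : ∀ v w, D (br v w) = br (D v) ((α ^ k * β ^ l) w) + br ((α ^ k * β ^ l) v) (D w))
    (hD' : ∀ v w, D' (br v w) = br (D' v) ((α ^ s * β ^ t) w) + br ((α ^ s * β ^ t) v) (D' w))
    (C : L → L) (hC : ∀ v, C v = D (D' v) - D' (D v)) :
    (∀ v, C (α v) = α (C v)) ∧ (∀ v, C (β v) = β (C v)) ∧
    (∀ v w, C (br v w) = br (C v) ((α ^ (k + s) * β ^ (l + t)) w)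
      + br ((α ^ (k + s) * β ^ (l + t)) v) (C w)) :=
  stmt_6_general br α β hcomm k l s t D D' hDα hDβ hD'α hD'β hD hD' C hC
end

section
/- Let (L, [·,·], α, β) be a regular BiHom-Lie algebra and D: L → L a linear map. On L ⊕ ℝD define the bracket [u,v]_D = [u,v], [D,u]_D = D(u), [u,D]_D = −αβ⁻¹(D(u)), and define α_D(u, D) = (α(u), D), β_D(u, D) = (β(u), D). Then (L ⊕ ℝD, [·,·]_D, α_D, β_D) is a BiHom-Lie algebra if and only if D is an α⁰β¹-derivation of (L, [·,·], α, β). -/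
/-- The derivation extension `L ⊕ ℝD` is a BiHom-Lie algebra iff `D` is an
`α⁰β¹`-derivation of `L`. -/
theorem stmt_8 {L : Type*} [AddCommGroup L] [Module ℝ L]
    (br : L →ₗ[ℝ] L →ₗ[ℝ] L) (α β : L ≃ₗ[ℝ] L)
    (hcomm : ∀ a, α (β a) = β (α a))
    (hαm : ∀ a b, α (br a b) = br (α a) (α b))
    (hβm : ∀ a b, β (br a b) = br (β a) (β b))
    (hskew : ∀ a a', br (β a) (α a') = - br (β a') (α a))
    (hjac : ∀ a a' a'', br (β (β a)) (br (β a') (α a''))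
      + br (β (β a')) (br (β a'') (α a))
      + br (β (β a'')) (br (β a) (α a')) = 0)
    (D : L →ₗ[ℝ] L)
    (BrD : L × ℝ → L × ℝ → L × ℝ)
    (hBrD : ∀ p q, BrD p q =
      (br p.1 q.1 + p.2 • D q.1 - q.2 • (α * β⁻¹) (D p.1), (0 : ℝ)))
    (AD BD : L × ℝ → L × ℝ)
    (hAD : ∀ p, AD p = (α p.1, p.2)) (hBD : ∀ p, BD p = (β p.1, p.2)) :
    ((∀ p, AD (BD p) = BD (AD p)) ∧
     (∀ p q, AD (BrD p q) = BrD (AD p) (AD q)) ∧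
     (∀ p q, BD (BrD p q) = BrD (BD p) (BD q)) ∧
     (∀ p q, BrD (BD p) (AD q) = - BrD (BD q) (AD p)) ∧
     (∀ p q r, BrD (BD (BD p)) (BrD (BD q) (AD r)) + BrD (BD (BD q)) (BrD (BD r) (AD p))
        + BrD (BD (BD r)) (BrD (BD p) (AD q)) = 0)) ↔
    ((∀ v, D (α v) = α (D v)) ∧ (∀ v, D (β v) = β (D v)) ∧
     (∀ u v, D (br u v) = br (D u) (β v) + br (β u) (D v))) := by
  have hmul : ∀ x, (α * β⁻¹) x = α (β.symm x) := fun _ => rfl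
  have hcomm' : ∀ a, α (β.symm a) = β.symm (α a) := by
    intro a
    have h := hcomm (β.symm a)
    rw [β.apply_symm_apply] at h
    exact (β.symm_apply_eq.mpr h).symm
  constructor
  · rintro ⟨h1, h2, h3, h4, h5⟩
    have hDα : ∀ v, D (α v) = α (D v) := by
      intro v
      have h := congrArg Prod.fst (h2 (0,1) (v,0))
      simp [hBrD, hAD] at h
      exact h.symm
    have hDβ : ∀ v, D (β v) = β (D v) := by
      intro v
      have h := congrArg Prod.fst (h3 (0,1) (v,0))
      simp [hBrD, hBD] at h
      exact h.symm
    refine ⟨hDα, hDβ, ?_⟩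
    intro a b
    obtain ⟨u, rfl⟩ : ∃ u, β u = a := ⟨β.symm a, β.apply_symm_apply a⟩
    obtain ⟨v, rfl⟩ : ∃ v, α v = b := ⟨α.symm b, α.apply_symm_apply b⟩
    have h := congrArg Prod.fst (h5 (0,1) (u,0) (v,0))
    simp [hBrD, hAD, hBD, hmul] at h
    rw [hDβ v, β.symm_apply_apply, ← hDα v] at h
    rw [hDβ u, ← hcomm v, hskew (D u) (β v), hDα u] at *
    linear_combination (norm := abel) h
  · rintro ⟨hDα, hDβ, hder⟩
    have key : ∀ x, α (β.symm (D (β x))) = D (α x) := by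
      intro x
      rw [hDβ, β.symm_apply_apply, hDα]
    refine ⟨?_, ?_, ?_, ?_, ?_⟩
    · intro p; rw [hBD, hAD, hAD, hBD]; simp [hcomm]
    · intro p q
      simp only [hBrD, hAD, hmul, map_add, map_sub, map_smul, Prod.mk.injEq]
      refine ⟨?_, trivial⟩
      rw [hαm, hDα, hcomm', hDα]
    · intro p q
      simp only [hBrD, hBD, hmul, map_add, map_sub, map_smul, Prod.mk.injEq]
      refine ⟨?_, trivial⟩
      rw [hβm, hDβ q.1, hDβ p.1, β.symm_apply_apply, hcomm', β.apply_symm_apply]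
    · intro p q
      simp only [hBrD, hBD, hAD, hmul, key, Prod.neg_mk, Prod.mk.injEq, neg_zero]
      refine ⟨?_, trivial⟩
      rw [hskew p.1 q.1]
      abel
    · intro p q r
      simp only [hBrD, hBD, hAD, hmul, key, Prod.mk_add_mk, Prod.mk_eq_zero, add_zero]
      refine ⟨?_, trivial⟩
      simp only [map_add, map_sub, map_smul, hder, hDα, hDβ, ← hcomm]
      rw [hskew (D q.1) (β r.1), hskew (D r.1) (β p.1), hskew (D p.1) (β q.1)]
      linear_combination (norm := module) hjac p.1 q.1 r.1
end

section
/- Let (L, [·,·], α, β) be a regular BiHom-Lie algebra and θ ∈ C²_{α,β}(L) a skew-symmetric bilinear form with θ∘(α⊗α) = θ and θ∘(β⊗β) = θ. On g = L ⊕ ℝ define [(u,s),(v,t)]_θ = ([u,v], θ(αβ⁻¹(u), v)), α_g(u,s) = (α(u), s), β_g(u,s) = (β(u), s). Then (g, [·,·]_θ, α_g, β_g) is a multiplicative BiHom-Lie algebra if and only if d_T θ = 0, i.e. θ(β(u), [α⁻¹β(v), w]) + θ(β(v), [α⁻¹β(w), u]) + θ(β(w), [α⁻¹β(u), v]) = 0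 for all u, v, w ∈ L. -/
/-- The central extension `g = L ⊕ ℝ` by a 2-BiHom-cochain `θ` is a
multiplicative BiHom-Lie algebra iff `θ` is a 2-cocycle for the trivial representation. -/
theorem stmt_13 {L : Type*} [AddCommGroup L] [Module ℝ L]
    (br : L →ₗ[ℝ] L →ₗ[ℝ] L) (α β : L ≃ₗ[ℝ] L)
    (hcomm : ∀ a, α (β a) = β (α a))
    (hαm : ∀ a b, α (br a b) = br (α a) (α b))
    (hβm : ∀ a b, β (br a b) = br (β a) (β b))
    (hskew : ∀ a a', br (β a) (α a') = - br (β a') (α a))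
    (hjac : ∀ a a' a'', br (β (β a)) (br (β a') (α a''))
      + br (β (β a')) (br (β a'') (α a))
      + br (β (β a'')) (br (β a) (α a')) = 0)
    (θ : L →ₗ[ℝ] L →ₗ[ℝ] ℝ)
    (hθskew : ∀ u v, θ u v = - θ v u)
    (hθα : ∀ u v, θ (α u) (α v) = θ u v)
    (hθβ : ∀ u v, θ (β u) (β v) = θ u v)
    (Brθ : L × ℝ → L × ℝ → L × ℝ)
    (hBrθ : ∀ p q, Brθ p q = (br p.1 q.1, θ ((α * β⁻¹) p.1) q.1))
    (Ag Bg : L × ℝ → L × ℝ)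
    (hAg : ∀ p, Ag p = (α p.1, p.2)) (hBg : ∀ p, Bg p = (β p.1, p.2)) :
    ((∀ p, Ag (Bg p) = Bg (Ag p)) ∧
     (∀ p q, Ag (Brθ p q) = Brθ (Ag p) (Ag q)) ∧
     (∀ p q, Bg (Brθ p q) = Brθ (Bg p) (Bg q)) ∧
     (∀ p q, Brθ (Bg p) (Ag q) = - Brθ (Bg q) (Ag p)) ∧
     (∀ p q r, Brθ (Bg (Bg p)) (Brθ (Bg q) (Ag r)) + Brθ (Bg (Bg q)) (Brθ (Bg r) (Ag p))
        + Brθ (Bg (Bg r)) (Brθ (Bg p) (Ag q)) = 0)) ↔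
    (∀ u v w, θ (β u) (br (α.symm (β v)) w) + θ (β v) (br (α.symm (β w)) u)
        + θ (β w) (br (α.symm (β u)) v) = 0) := by

  have hmul : ∀ x : L, (α * β⁻¹) x = α (β.symm x) := fun x => rfl
  have key : ∀ u v w : L, θ ((α * β⁻¹) (β (β u))) (br (β v) (α w))
      = θ (β u) (br (α.symm (β v)) w) := by
    intro u v w
    rw [hmul]
    have h1 : β.symm (β (β u)) = β u := by simp
    have h2 : br (β v) (α w) = α (br (α.symm (β v)) w) := by
      rw [hαm]; simp
    rw [h1, h2, hθα]
  constructor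
  · rintro ⟨-, -, -, -, h5⟩ u v w
    have := h5 (u, 0) (v, 0) (w, 0)
    simp only [hBrθ, hAg, hBg] at this
    have h2 := congrArg Prod.snd this
    simp only [Prod.snd_add, Prod.snd_zero] at h2
    simpa only [key] using h2
  · intro hc
    refine ⟨?_, ?_, ?_, ?_, ?_⟩
    · intro p
      rw [hAg, hBg, hAg, hBg]
      exact Prod.ext (hcomm p.1) rfl
    · intro p q
      rw [hBrθ, hAg, hAg, hAg, hBrθ]
      refine Prod.ext (hαm _ _) ?_
      show θ ((α * β⁻¹) p.1) q.1 = θ ((α * β⁻¹) (α p.1)) (α q.1)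
      rw [hmul, hmul]
      have : β.symm (α p.1) = α (β.symm p.1) := by
        apply β.injective
        rw [← hcomm]; simp
      rw [this, hθα]
    · intro p q
      rw [hBrθ, hBg, hBg, hBg, hBrθ]
      refine Prod.ext (hβm _ _) ?_
      show θ ((α * β⁻¹) p.1) q.1 = θ ((α * β⁻¹) (β p.1)) (β q.1)
      rw [hmul, hmul]
      simp only [LinearEquiv.symm_apply_apply]
      have : α p.1 = β (α (β.symm p.1)) := by
        rw [← hcomm]; simp
      rw [this, hθβ]
    · intro p q
      rw [hBrθ, hBrθ, hBg, hBg, hAg, hAg]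
      refine Prod.ext (hskew _ _) ?_
      show θ ((α * β⁻¹) (β p.1)) (α q.1) = -θ ((α * β⁻¹) (β q.1)) (α p.1)
      rw [hmul, hmul]
      simp only [LinearEquiv.symm_apply_apply, hθα]
      exact hθskew _ _
    · intro p q r
      simp only [hBrθ, hBg, hAg]
      refine Prod.ext ?_ ?_
      · exact hjac p.1 q.1 r.1
      · show θ ((α * β⁻¹) (β (β p.1))) (br (β q.1) (α r.1))
          + θ ((α * β⁻¹) (β (β q.1))) (br (β r.1) (α p.1))
          + θ ((α * β⁻¹) (β (β r.1))) (br (β p.1) (α q.1)) = 0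
        rw [key, key, key]
        exact hc p.1 q.1 r.1
end

section
/- Let (L, [·,·], α, β) be a regular BiHom-Lie algebra and θ₁, θ₂ closed 2-BiHom-cochains (for the trivial representation) such that θ₁ − θ₂ = d_T f for some f ∈ C¹_{α,β}(L). Then the map φ_g: L ⊕ ℝ → L ⊕ ℝ given by φ_g(u, s) = (u, s − f(u)) is an isomorphism of BiHom-Lie algebras from the central extension (g, [·,·]_{θ₁}, α_g, β_g) to (g, [·,·]_{θ₂}, α_g, β_g). -/
/-- If two closed 2-BiHom-cochains differ by an exact one, the corresponding
central extensions are isomorphic via `φ(u,s) = (u, s - f(u))`. -/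
theorem stmt_14 {L : Type*} [AddCommGroup L] [Module ℝ L]
    (br : L →ₗ[ℝ] L →ₗ[ℝ] L) (α β : L ≃ₗ[ℝ] L)
    (hcomm : ∀ a, α (β a) = β (α a))
    (hαm : ∀ a b, α (br a b) = br (α a) (α b))
    (hβm : ∀ a b, β (br a b) = br (β a) (β b))
    (hskew : ∀ a a', br (β a) (α a') = - br (β a') (α a))
    (hjac : ∀ a a' a'', br (β (β a)) (br (β a') (α a''))
      + br (β (β a')) (br (β a'') (α a))
      + br (β (β a'')) (br (β a) (α a')) = 0)
    (θ₁ θ₂ : L →ₗ[ℝ] L →ₗ[ℝ] ℝ)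
    (hθ₁skew : ∀ u v, θ₁ u v = - θ₁ v u) (hθ₂skew : ∀ u v, θ₂ u v = - θ₂ v u)
    (hθ₁α : ∀ u v, θ₁ (α u) (α v) = θ₁ u v) (hθ₂α : ∀ u v, θ₂ (α u) (α v) = θ₂ u v)
    (hθ₁β : ∀ u v, θ₁ (β u) (β v) = θ₁ u v) (hθ₂β : ∀ u v, θ₂ (β u) (β v) = θ₂ u v)
    (hθ₁closed : ∀ u v w, θ₁ (br (α.symm (β u)) v) (β w) - θ₁ (br (α.symm (β u)) w) (β v)
        + θ₁ (br (α.symm (β v)) w) (β u) = 0)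
    (hθ₂closed : ∀ u v w, θ₂ (br (α.symm (β u)) v) (β w) - θ₂ (br (α.symm (β u)) w) (β v)
        + θ₂ (br (α.symm (β v)) w) (β u) = 0)
    (f : L →ₗ[ℝ] ℝ) (hfα : ∀ u, f (α u) = f u) (hfβ : ∀ u, f (β u) = f u)
    (hexact : ∀ u v, θ₁ u v - θ₂ u v = f (br (α.symm (β u)) v))
    (Br₁ Br₂ : L × ℝ → L × ℝ → L × ℝ)
    (hBr₁ : ∀ p q, Br₁ p q = (br p.1 q.1, θ₁ ((α * β⁻¹) p.1) q.1))
    (hBr₂ : ∀ p q, Br₂ p q = (br p.1 q.1, θ₂ ((α * β⁻¹) p.1) q.1))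
    (Ag Bg : L × ℝ → L × ℝ)
    (hAg : ∀ p, Ag p = (α p.1, p.2)) (hBg : ∀ p, Bg p = (β p.1, p.2))
    (φ : L × ℝ → L × ℝ) (hφ : ∀ p, φ p = (p.1, p.2 - f p.1)) :
    Function.Bijective φ ∧
    (∀ p, φ (Ag p) = Ag (φ p)) ∧
    (∀ p, φ (Bg p) = Bg (φ p)) ∧
    (∀ p q, φ (Br₁ p q) = Br₂ (φ p) (φ q)) := by
  refine ⟨?_, ?_, ?_, ?_⟩
  · refine Function.bijective_iff_has_inverse.mpr ⟨fun p => (p.1, p.2 + f p.1), ?_, ?_⟩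
    · intro p; simp [hφ]
    · intro p; simp [hφ]
  · intro p; simp [hφ, hAg, hfα]
  · intro p; simp [hφ, hBg, hfβ]
  · intro p q
    simp only [hφ, hBr₁, hBr₂]
    refine Prod.ext rfl ?_
    have hkey : ∀ u v : L, θ₁ ((α * β⁻¹) u) v - θ₂ ((α * β⁻¹) u) v = f (br u v) := by
      intro u v
      have h1 : (α * β⁻¹) u = α (β.symm u) := rfl
      have h2 : α.symm (β (α (β.symm u))) = u := by
        rw [← hcomm]; simp
      have := hexact (α (β.symm u)) v
      rw [h2] at this
      rw [h1]; exact this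
    have := hkey p.1 q.1
    simp only []
    linarith
end

section
/- Let (L, [·,·], α, β) be a regular BiHom-Lie algebra and fix integers s, t. Define ad_{s,t}(u)(v) = [α^s β^t(u), v]. Then ad_{s,t}: L → End(L) together with the maps α, β defines a representation of L on itself, i.e. ad_{s,t}(α(u))∘α = α∘ad_{s,t}(u), ad_{s,t}(β(u))∘β = β∘ad_{s,t}(u), and ad_{s,t}([β(u), v])∘β = ad_{s,t}(αβ(u))∘ad_{s,t}(v) − ad_{s,t}(β(v))∘ad_{s,t}(α(u)) for all u, v ∈ L. -/
/-!
The map `γ = αˢβᵗ` commutes with `α` and `β` and preserves the bracket (bracket-preserving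
automorphisms form a subgroup), so `ad_{s,t}(u) = ad_{0,0}(γ u)` and all three identities reduce,
after moving `γ` through the brackets, to the case `s = t = 0`. That case is the BiHom-Jacobi
identity at a suitably reparametrised triple, combined with skew-symmetry.
-/

namespace BiHomLie

variable {R M : Type*} [CommSemiring R] [AddCommGroup M] [Module R M]

structure IsRegular (br : M →ₗ[R] M →ₗ[R] M) (α β : M ≃ₗ[R] M) : Prop where
  comm : ∀ a, α (β a) = β (α a)
  map_bracket_α : ∀ a b, α (br a b) = br (α a) (α b)
  map_bracket_β : ∀ a b, β (br a b) = br (β a) (β b)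
  skew : ∀ a a', br (β a) (α a') = - br (β a') (α a)
  jacobi : ∀ a a' a'', br (β (β a)) (br (β a') (α a''))
      + br (β (β a')) (br (β a'') (α a))
      + br (β (β a'')) (br (β a) (α a')) = 0

def bracketAut (br : M →ₗ[R] M →ₗ[R] M) : Subgroup (M ≃ₗ[R] M) where
  carrier := {e | ∀ a b, e (br a b) = br (e a) (e b)}
  one_mem' _ _ := rfl
  mul_mem' {e f} he hf a b := (congrArg e (hf a b)).trans (he _ _)
  inv_mem' {e} he a b := e.injective <| by
    rw [LinearEquiv.coe_inv, e.apply_symm_apply, he, e.apply_symm_apply, e.apply_symm_apply]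

variable {br : M →ₗ[R] M →ₗ[R] M} {α β : M ≃ₗ[R] M}

theorem IsRegular.commute (h : IsRegular br α β) : Commute α β :=
  LinearEquiv.ext h.comm

theorem IsRegular.α_mem_bracketAut (h : IsRegular br α β) : α ∈ bracketAut br :=
  h.map_bracket_α

theorem IsRegular.β_mem_bracketAut (h : IsRegular br α β) : β ∈ bracketAut br :=
  h.map_bracket_β

theorem IsRegular.bracket_bracket (h : IsRegular br α β) (x y w : M) :
    br (br (β x) y) (β w) = br (α (β x)) (br y w) - br (β y) (br (α x) w) := by
  -- Reparametrise so that the Jacobi identity at `(α b, a', a'')` applies verbatim.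
  obtain ⟨b, rfl⟩ := β.surjective x
  obtain ⟨a', rfl⟩ := β.surjective y
  obtain ⟨a'', rfl⟩ := α.surjective w
  have h₁ : br (β (β (α b))) (br (β a') (α a'')) = br (α (β (β b))) (br (β a') (α a'')) := by
    rw [h.comm, h.comm]
  have h₂ : br (β (β a')) (br (β a'') (α (α b))) = - br (β (β a')) (br (α (β b)) (α a'')) := by
    rw [h.skew, h.comm, map_neg]
  have h₃ : br (β (β a'')) (br (β (α b)) (α a')) = - br (br (β (β b)) (β a')) (β (α a'')) := by
    rw [← h.comm, ← h.map_bracket_α, h.skew, h.map_bracket_β, h.comm]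
  have := h.jacobi (α b) a' a''
  rw [h₁, h₂, h₃] at this
  rw [eq_comm, ← sub_eq_zero, ← this]
  abel

theorem IsRegular.adjoint_isRepresentation (h : IsRegular br α β) {γ : M ≃ₗ[R] M}
    (hγ : γ ∈ bracketAut br) (hαγ : Commute α γ) (hβγ : Commute β γ) :
    (∀ u v, br (γ (α u)) (α v) = α (br (γ u) v)) ∧
    (∀ u v, br (γ (β u)) (β v) = β (br (γ u) v)) ∧
    (∀ u v w, br (γ (br (β u) v)) (β w)
      = br (γ (α (β u))) (br (γ v) w) - br (γ (β v)) (br (γ (α u)) w)) := by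
  have hγα (a : M) : γ (α a) = α (γ a) := DFunLike.congr_fun hαγ.eq.symm a
  have hγβ (a : M) : γ (β a) = β (γ a) := DFunLike.congr_fun hβγ.eq.symm a
  refine ⟨fun u v => ?_, fun u v => ?_, fun u v w => ?_⟩
  · rw [hγα, h.map_bracket_α]
  · rw [hγβ, h.map_bracket_β]
  · rw [hγ, hγα, hγβ, hγβ, hγα]
    exact h.bracket_bracket (γ u) (γ v) w

end BiHomLie

open BiHomLie in
/-- The `αˢβᵗ`-adjoint action `ad_{s,t}(u)(v) = [αˢβᵗ(u), v]` defines a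
representation of a regular BiHom-Lie algebra on itself. -/
theorem stmt_15 {K : Type*} [Field K] {L : Type*} [AddCommGroup L] [Module K L]
(br : L →ₗ[K] L →ₗ[K] L) (α β : L ≃ₗ[K] L)
    (hcomm : ∀ a, α (β a) = β (α a))
    (hαm : ∀ a b, α (br a b) = br (α a) (α b))
    (hβm : ∀ a b, β (br a b) = br (β a) (β b))
    (hskew : ∀ a a', br (β a) (α a') = - br (β a') (α a))
    (hjac : ∀ a a' a'', br (β (β a)) (br (β a') (α a''))
      + br (β (β a')) (br (β a'') (α a))
      + br (β (β a'')) (br (β a) (α a')) = 0)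
    (s t : ℤ) (ad : L → L → L)
    (had : ∀ u v, ad u v = br ((α ^ s * β ^ t) u) v) :
    (∀ u v, ad (α u) (α v) = α (ad u v)) ∧
    (∀ u v, ad (β u) (β v) = β (ad u v)) ∧
    (∀ u v w, ad (br (β u) v) (β w) = ad (α (β u)) (ad v w) - ad (β v) (ad (α u) w)) := by
  have hL : IsRegular br α β := ⟨hcomm, hαm, hβm, hskew, hjac⟩
  obtain rfl : ad = fun u v => br ((α ^ s * β ^ t) u) v := funext₂ had
  exact hL.adjoint_isRepresentation
    (mul_mem (zpow_mem hL.α_mem_bracketAut s) (zpow_mem hL.β_mem_bracketAut t))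
    (((Commute.refl α).zpow_right s).mul_right (hL.commute.zpow_right t))
    ((hL.commute.symm.zpow_right s).mul_right ((Commute.refl β).zpow_right t))
end

section
/- Let (L, [·,·], α, β) be a regular BiHom-Lie algebra. For any integers s, t, the first cohomology of the α^s β^t-adjoint representation satisfies H¹(L; ad_{s,t}) = Der_{α^{s+2}β^{t−1}}(L) / Inn_{α^{s+2}β^{t−1}}(L). -/
/-!
Substituting `u = αβ⁻¹ x` in the cocycle identity of `ad_{s,t}` turns `α⁻¹β u` into `x` and
`αˢ⁺¹βᵗ u` into `αˢ⁺²βᵗ⁻¹ x`, while BiHom skew-symmetry `[β a, α b] = -[β b, α a]` rewrites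
`[αˢ⁺¹βᵗ v, D u] = [β (αˢ⁺¹βᵗ⁻¹ v), α (β⁻¹ D x)]` as `-[D x, αˢ⁺²βᵗ⁻¹ v]`. The cocycle identity
at `(αβ⁻¹ x, v)` is then exactly the `αˢ⁺²βᵗ⁻¹`-derivation identity at `(x, v)`, and `αβ⁻¹` is
bijective. The coboundaries agree on the nose.
-/

section GroupIdentities

variable {G : Type*} [Group G] {a b : G}

theorem Commute.zpow_succ_mul_zpow_mul_mul_inv (h : Commute a b) (s t : ℤ) :
    a ^ (s + 1) * b ^ t * (a * b⁻¹) = a ^ (s + 2) * b ^ (t - 1) := by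
  rw [mul_assoc, ← mul_assoc (b ^ t), (h.symm.zpow_left t).eq]
  group

theorem Commute.inv_mul_mul_mul_inv (h : Commute a b) : a⁻¹ * b * (a * b⁻¹) = 1 := by
  rw [mul_assoc, ← mul_assoc b, h.symm.eq]
  group

theorem Commute.zpow_succ_mul_zpow (h : Commute a b) (s t : ℤ) :
    a ^ (s + 1) * b ^ t = b * (a ^ (s + 1) * b ^ (t - 1)) := by
  rw [← mul_assoc, ← (h.zpow_left (s + 1)).eq]
  group

end GroupIdentities

section BiHom

variable {K L : Type*} [CommSemiring K] [AddCommGroup L] [Module K L]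

theorem LinearEquiv.inv_apply_comm {e : L ≃ₗ[K] L} {f : L → L}
    (h : ∀ v, f (e v) = e (f v)) (v : L) : f (e⁻¹ v) = e⁻¹ (f v) := by
  apply e.injective
  rw [← h]
  simp

variable (br : L →ₗ[K] L →ₗ[K] L) {α β : L ≃ₗ[K] L}

theorem bracket_zpow_mul_inv_eq_neg
    (hcomm : Commute α β) (hskew : ∀ a a', br (β a) (α a') = - br (β a') (α a))
    (s t : ℤ) (v w : L) :
    br ((α ^ (s + 1) * β ^ t) v) ((α * β⁻¹) w) = - br w ((α ^ (s + 2) * β ^ (t - 1)) v) := by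
  have hα : α * (α ^ (s + 1) * β ^ (t - 1)) = α ^ (s + 2) * β ^ (t - 1) := by group
  rw [hcomm.zpow_succ_mul_zpow, LinearEquiv.mul_apply, LinearEquiv.mul_apply α,
    LinearEquiv.coe_inv, hskew, LinearEquiv.apply_symm_apply, ← LinearEquiv.mul_apply α, hα]

theorem cocycle_apply_mul_inv
    (hcomm : Commute α β) (hskew : ∀ a a', br (β a) (α a') = - br (β a') (α a))
    (s t : ℤ) {D : Module.End K L} (hDα : ∀ v, D (α v) = α (D v))
    (hDβ : ∀ v, D (β v) = β (D v)) (x v : L) :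
    - br ((α ^ (s + 1) * β ^ t) ((α * β⁻¹) x)) (D v)
        + br ((α ^ (s + 1) * β ^ t) v) (D ((α * β⁻¹) x)) + D (br ((α⁻¹ * β) ((α * β⁻¹) x)) v)
      = D (br x v) - (br (D x) ((α ^ (s + 2) * β ^ (t - 1)) v)
          + br ((α ^ (s + 2) * β ^ (t - 1)) x) (D v)) := by
  have hDγ : D ((α * β⁻¹) x) = (α * β⁻¹) (D x) := by
    simp only [LinearEquiv.mul_apply, hDα, LinearEquiv.inv_apply_comm hDβ]
  rw [← LinearEquiv.mul_apply (α ^ (s + 1) * β ^ t), hcomm.zpow_succ_mul_zpow_mul_mul_inv,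
    ← LinearEquiv.mul_apply (α⁻¹ * β), hcomm.inv_mul_mul_mul_inv, LinearEquiv.coe_one, id, hDγ,
    bracket_zpow_mul_inv_eq_neg br hcomm hskew]
  abel

end BiHom

theorem stmt_18_general {K : Type*} [Field K] {L : Type*} [AddCommGroup L] [Module K L]
(br : L →ₗ[K] L →ₗ[K] L) (α β : L ≃ₗ[K] L)
    (hcomm : ∀ a, α (β a) = β (α a))
    (hskew : ∀ a a', br (β a) (α a') = - br (β a') (α a))
    (s t : ℤ) :
    -- Z¹(L; ad_{s,t}) = Der_{α^{s+2}β^{t-1}}(L)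
    ({D : Module.End K L | (∀ v, D (α v) = α (D v)) ∧ (∀ v, D (β v) = β (D v)) ∧
        ∀ u v, - br ((α ^ (s + 1) * β ^ t) u) (D v) + br ((α ^ (s + 1) * β ^ t) v) (D u)
          + D (br ((α⁻¹ * β) u) v) = 0}
      = {D : Module.End K L | (∀ v, D (α v) = α (D v)) ∧ (∀ v, D (β v) = β (D v)) ∧
        ∀ u v, D (br u v) = br (D u) ((α ^ (s + 2) * β ^ (t - 1)) v)
          + br ((α ^ (s + 2) * β ^ (t - 1)) u) (D v)}) ∧
    -- B¹(L; ad_{s,t}) = Inn_{α^{s+2}β^{t-1}}(L)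
    ({D : Module.End K L | ∃ u, α u = u ∧ β u = u ∧
        ∀ v, D v = - br ((α ^ (s + 1) * β ^ (t - 1)) v) u}
      = {D : Module.End K L | ∃ u, α u = u ∧ β u = u ∧
        ∀ v, D v = - br ((α ^ (s + 2 - 1) * β ^ (t - 1)) v) u}) := by
  have hαβ : Commute α β := LinearEquiv.ext hcomm
  refine ⟨?_, by rw [add_sub_assoc, show (2 : ℤ) - 1 = 1 by norm_num]⟩
  ext D
  refine and_congr_right fun hDα => and_congr_right fun hDβ => ?_
  rw [(α * β⁻¹).surjective.forall]
  simp only [cocycle_apply_mul_inv br hαβ hskew s t hDα hDβ, sub_eq_zero]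

/-- `H¹(L; ad_{s,t}) = Der_{α^{s+2}β^{t-1}}(L) / Inn_{α^{s+2}β^{t-1}}(L)` :
the 1-cocycles of the `αˢβᵗ`-adjoint representation are exactly the
`α^{s+2}β^{t-1}`-derivations, and the 1-coboundaries are exactly the inner
`α^{s+2}β^{t-1}`-derivations. -/
theorem stmt_18 {K : Type*} [Field K] {L : Type*} [AddCommGroup L] [Module K L]
(br : L →ₗ[K] L →ₗ[K] L) (α β : L ≃ₗ[K] L)
    (hcomm : ∀ a, α (β a) = β (α a))
    (hαm : ∀ a b, α (br a b) = br (α a) (α b))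
    (hβm : ∀ a b, β (br a b) = br (β a) (β b))
    (hskew : ∀ a a', br (β a) (α a') = - br (β a') (α a))
    (hjac : ∀ a a' a'', br (β (β a)) (br (β a') (α a''))
      + br (β (β a')) (br (β a'') (α a))
      + br (β (β a'')) (br (β a) (α a')) = 0)
    (s t : ℤ) :
    -- Z¹(L; ad_{s,t}) = Der_{α^{s+2}β^{t-1}}(L)
    ({D : Module.End K L | (∀ v, D (α v) = α (D v)) ∧ (∀ v, D (β v) = β (D v)) ∧
        ∀ u v, - br ((α ^ (s + 1) * β ^ t) u) (D v) + br ((α ^ (s + 1) * β ^ t) v) (D u)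
          + D (br ((α⁻¹ * β) u) v) = 0}
      = {D : Module.End K L | (∀ v, D (α v) = α (D v)) ∧ (∀ v, D (β v) = β (D v)) ∧
        ∀ u v, D (br u v) = br (D u) ((α ^ (s + 2) * β ^ (t - 1)) v)
          + br ((α ^ (s + 2) * β ^ (t - 1)) u) (D v)}) ∧
    -- B¹(L; ad_{s,t}) = Inn_{α^{s+2}β^{t-1}}(L)
    ({D : Module.End K L | ∃ u, α u = u ∧ β u = u ∧
        ∀ v, D v = - br ((α ^ (s + 1) * β ^ (t - 1)) v) u}
      = {D : Module.End K L | ∃ u, α u = u ∧ β u = u ∧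
        ∀ v, D v = - br ((α ^ (s + 2 - 1) * β ^ (t - 1)) v) u}) :=
  stmt_18_general br α β hcomm hskew s t
end
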